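/- For every latin square L and every integer k: either L has a k-weight for all integers k, or L has a k-weight exactly for the even integers k. Equivalently, since L always has a 2-weight, if L has any odd-weight then it has a k-weight for every integer k. -/
import Mathlib


/-- A latin square of order `n`: each symbol occurs exactly once in each row and column. -/
def IsLatinSquare {n : ℕ} (L : Fin n × Fin n → Fin n) : Prop :=
  (∀ x, Function.Injective fun y => L (x, y)) ∧ (∀ y, Function.Injective fun x => L (x, y))

/-- A `k`-weight of a latin square `L`: all row, column, and symbol sums equal `k`. -/
def IsWeight {n : ℕ} (L : Fin n × Fin n → Fin n) (θ : Fin n × Fin n → ℤ) (k : ℤ) : Prop :=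
  (∀ x, ∑ y, θ (x, y) = k) ∧ (∀ y, ∑ x, θ (x, y) = k) ∧
  (∀ z, ∑ p : Fin n × Fin n, (if L p = z then θ p else 0) = k)


lemma multiset_nsmul_sum {A : Type*} [AddCommGroup A] (m : ℕ) (s : Multiset A) :
    (m • s).sum = m • s.sum := by
  induction m with
  | zero => simp
  | succ k ih => rw [succ_nsmul, succ_nsmul, Multiset.sum_add, ih]

lemma two_sum_eq_zero {A : Type*} [AddCommGroup A] [DecidableEq A] (V : Multiset A)
    (h0 : (0 : A) ∈ V)
    (hinv : ∀ v ∈ V, V.map (· + v) = V) : V.sum + V.sum = 0 := by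
  classical
  set s : Finset A := V.toFinset with hs
  have hcount : ∀ v ∈ V, ∀ x : A, V.count (x + v) = V.count x := by
    intro v hv x
    conv_lhs => rw [← hinv v hv]
    exact Multiset.count_map_eq_count' _ V (add_left_injective v) x
  have hmem : ∀ v ∈ s, ∀ x ∈ s, x + v ∈ s := by
    intro v hv x hx
    rw [hs, Multiset.mem_toFinset] at *
    rw [← Multiset.count_pos, hcount v hv x, Multiset.count_pos]
    exact hx
  have h0s : (0 : A) ∈ s := by rwa [hs, Multiset.mem_toFinset]
  have hneg : ∀ x ∈ s, -x ∈ s := by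
    intro x hx
    have himg : Finset.image (· + x) s = s := by
      apply Finset.eq_of_subset_of_card_le
      · intro y hy
        obtain ⟨u, hu, rfl⟩ := Finset.mem_image.mp hy
        exact hmem x hx u hu
      · rw [Finset.card_image_of_injective _ (add_left_injective x)]
    have h0i : (0 : A) ∈ Finset.image (· + x) s := by rw [himg]; exact h0s
    obtain ⟨u, hu, hux⟩ := Finset.mem_image.mp h0i
    have : u = -x := eq_neg_of_add_eq_zero_left hux
    rwa [← this]
  have hconst : ∀ x ∈ s, V.count x = V.count 0 := by
    intro x hx
    have hxV : x ∈ V := by rwa [hs, Multiset.mem_toFinset] at hx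
    have := hcount x hxV 0
    rwa [zero_add] at this
  set m : ℕ := V.count 0 with hm
  have hV : V = m • s.val := by
    ext a
    rw [Multiset.count_nsmul]
    by_cases ha : a ∈ s
    · have hval : Multiset.count a s.val = 1 :=
        Multiset.count_eq_one_of_mem s.nodup ha
      rw [hconst a ha, hval, mul_one]
    · have haV : a ∉ V := by rwa [hs, Multiset.mem_toFinset] at ha
      have hval : Multiset.count a s.val = 0 :=
        Multiset.count_eq_zero_of_notMem ha
      rw [Multiset.count_eq_zero_of_notMem haV, hval, mul_zero]
  have hnegimg : Finset.image (fun x => -x) s = s := by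
    apply Finset.eq_of_subset_of_card_le
    · intro y hy
      obtain ⟨u, hu, rfl⟩ := Finset.mem_image.mp hy
      exact hneg u hu
    · exact le_of_eq (Finset.card_image_of_injective _ neg_injective).symm
  have hsneg : (∑ x ∈ s, x) = -∑ x ∈ s, x := by
    conv_lhs => rw [← hnegimg]
    rw [Finset.sum_image (fun a _ b _ h => neg_injective h)]
    rw [← Finset.sum_neg_distrib]
  have hss : (∑ x ∈ s, x) + ∑ x ∈ s, x = 0 := by
    nth_rewrite 2 [hsneg]; exact add_neg_cancel _
  have hvalsum : s.val.sum = ∑ x ∈ s, x := by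
    conv_lhs => rw [← Multiset.map_id' s.val]
    exact Finset.sum_map_val s (fun x => x)
  have hsum : V.sum = m • ∑ x ∈ s, x := by
    conv_lhs => rw [hV]
    rw [multiset_nsmul_sum, hvalsum]
  rw [hsum, ← smul_add, hss, smul_zero]

section TwoWeight

variable {n : ℕ}

lemma exists_two_weight (hn : 0 < n) (L : Fin n × Fin n → Fin n) (hL : IsLatinSquare L) :
    ∃ θ, IsWeight L θ 2 := by
  classical
  haveI : NeZero n := ⟨hn.ne'⟩
  have rowBij : ∀ x, Function.Bijective (fun y => L (x, y)) :=
    fun x => Finite.injective_iff_bijective.mp (hL.1 x)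
  have colBij : ∀ y, Function.Bijective (fun x => L (x, y)) :=
    fun y => Finite.injective_iff_bijective.mp (hL.2 y)
  set gen : Fin n × Fin n → ((Fin n → ℤ) × (Fin n → ℤ) × (Fin n → ℤ)) :=
    fun p => (Pi.single p.1 1, Pi.single p.2 1, Pi.single (L p) 1) with hgen
  set t : ((Fin n → ℤ) × (Fin n → ℤ) × (Fin n → ℤ)) :=
    ((fun _ => 2), (fun _ => 2), (fun _ => 2)) with ht
  set W : Submodule ℤ ((Fin n → ℤ) × (Fin n → ℤ) × (Fin n → ℤ)) :=
    Submodule.span ℤ (Set.range gen) with hW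
  have key : t ∈ W := by
    by_contra hkey
    have hmk : (Submodule.Quotient.mk t : _ ⧸ W) ≠ 0 := by
      rw [Ne, Submodule.Quotient.mk_eq_zero]; exact hkey
    obtain ⟨χ, hχ⟩ := CharacterModule.exists_character_apply_ne_zero_of_ne_zero hmk
    set f : ((Fin n → ℤ) × (Fin n → ℤ) × (Fin n → ℤ)) →+ AddCircle (1 : ℚ) :=
      (show (_ ⧸ W) →+ AddCircle (1 : ℚ) from χ).comp W.mkQ.toAddMonoidHom with hf
    have hfW : ∀ w ∈ W, f w = 0 := by
      intro w hw
      have h1 : f w = χ (Submodule.Quotient.mk w) := rfl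
      rw [h1, (Submodule.Quotient.mk_eq_zero W).mpr hw, map_zero]
    have hft : f t ≠ 0 := hχ
    set a : Fin n → AddCircle (1 : ℚ) :=
      fun x => f ((Pi.single x 1 : Fin n → ℤ), 0, 0) with ha
    set b : Fin n → AddCircle (1 : ℚ) :=
      fun y => f (0, (Pi.single y 1 : Fin n → ℤ), 0) with hb
    set cc : Fin n → AddCircle (1 : ℚ) :=
      fun z => f (0, 0, (Pi.single z 1 : Fin n → ℤ)) with hcdef
    have Rel : ∀ x y : Fin n, a x + b y + cc (L (x, y)) = 0 := by
      intro x y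
      have hgenW : gen (x, y) ∈ W := by
        rw [hW]; exact Submodule.subset_span ⟨(x, y), rfl⟩
      have heq : a x + b y + cc (L (x, y)) = f (gen (x, y)) := by
        rw [ha, hb, hcdef, ← map_add, ← map_add]
        congr 1
        simp [hgen, Prod.ext_iff]
      rw [heq]; exact hfW _ hgenW
    have hcc : ∀ x y : Fin n, cc (L (x, y)) = -(a x + b y) :=
      fun x y => eq_neg_of_add_eq_zero_right (Rel x y)
    set g : Fin n → AddCircle (1 : ℚ) := fun z => cc z - cc (L (0, 0)) with hg
    have keyg : ∀ x y : Fin n, g (L (x, y)) = g (L (x, 0)) + g (L (0, y)) := by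
      intro x y
      simp only [hg, hcc x y, hcc x (0 : Fin n), hcc (0 : Fin n) y, hcc (0 : Fin n) (0 : Fin n)]
      abel
    have reindex : ∀ (F : Fin n → AddCircle (1 : ℚ)) (e : Fin n → Fin n),
        Function.Bijective e →
        Finset.univ.val.map (fun i => F (e i)) = Finset.univ.val.map F := by
      intro F e he
      have h1 : (Finset.univ.map (Equiv.ofBijective e he).toEmbedding) = Finset.univ :=
        Finset.map_univ_equiv _
      have h2 : Finset.univ.val.map e = Finset.univ.val := congrArg Finset.val h1
      conv_rhs => rw [← h2]
      rw [Multiset.map_map]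
      rfl
    set V : Multiset (AddCircle (1 : ℚ)) := Finset.univ.val.map g with hVm
    have h0V : (0 : AddCircle (1 : ℚ)) ∈ V := by
      rw [hVm]
      exact Multiset.mem_map.mpr ⟨L (0, 0), by simp, sub_self _⟩
    have hinvV : ∀ v ∈ V, V.map (· + v) = V := by
      intro v hv
      rw [hVm] at hv
      obtain ⟨zs, _, rfl⟩ := Multiset.mem_map.mp hv
      obtain ⟨x, hx⟩ := (colBij 0).2 zs
      rw [hVm, Multiset.map_map]
      have step1 : Finset.univ.val.map ((· + g zs) ∘ g)
          = Finset.univ.val.map (fun y => g (L (0, y)) + g zs) :=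
        (reindex (fun z => g z + g zs) (fun y => L (0, y)) (rowBij 0)).symm
      have step2 : Finset.univ.val.map (fun y => g (L (0, y)) + g zs)
          = Finset.univ.val.map (fun y => g (L (x, y))) := by
        apply Multiset.map_congr rfl
        intro y _
        rw [← hx, keyg x y]
        abel
      have step3 : Finset.univ.val.map (fun y => g (L (x, y)))
          = Finset.univ.val.map g :=
        reindex g (fun y => L (x, y)) (rowBij x)
      rw [step1, step2, step3]
    have hVsum : V.sum + V.sum = 0 := two_sum_eq_zero V h0V hinvV
    have hVs : V.sum = ∑ z, g z := by
      rw [hVm]; exact Finset.sum_map_val _ _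
    -- big sums
    set Sa : AddCircle (1 : ℚ) := ∑ x, a x with hSa
    set Sb : AddCircle (1 : ℚ) := ∑ y, b y with hSb
    set Sc : AddCircle (1 : ℚ) := ∑ z, cc z with hSc
    set Sg : AddCircle (1 : ℚ) := ∑ z, g z with hSg
    set nu : AddCircle (1 : ℚ) := n • b 0 with hnu
    set nw : AddCircle (1 : ℚ) := n • a 0 with hnw
    set nv : AddCircle (1 : ℚ) := n • cc (L (0, 0)) with hnv
    have E1 : Sa + nu + Sc = 0 := by
      have h0 : ∑ x : Fin n, (a x + b 0 + cc (L (x, 0))) = 0 :=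
        Finset.sum_eq_zero (fun x _ => Rel x 0)
      rw [Finset.sum_add_distrib, Finset.sum_add_distrib, Finset.sum_const,
        Finset.card_univ, Fintype.card_fin] at h0
      rwa [(colBij 0).sum_comp cc] at h0
    have E2 : nw + Sb + Sc = 0 := by
      have h0 : ∑ y : Fin n, (a 0 + b y + cc (L (0, y))) = 0 :=
        Finset.sum_eq_zero (fun y _ => Rel 0 y)
      rw [Finset.sum_add_distrib, Finset.sum_add_distrib, Finset.sum_const,
        Finset.card_univ, Fintype.card_fin] at h0
      rwa [(rowBij 0).sum_comp cc] at h0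
    have E3 : nw + nu + nv = 0 := by
      rw [hnw, hnu, hnv, ← smul_add, ← smul_add, Rel 0 0, smul_zero]
    have hSgeq : Sg = Sc - nv := by
      rw [hSg]
      simp only [hg]
      rw [Finset.sum_sub_distrib, Finset.sum_const, Finset.card_univ, Fintype.card_fin,
        ← hSc, ← hnv]
    have hX : Sa + Sb + Sc = -Sg := by
      have hcalc : Sa + Sb + Sc + Sg =
          (Sa + nu + Sc) + (nw + Sb + Sc) + (Sg - (Sc - nv)) - (nw + nu + nv) := by abel
      rw [E1, E2, E3, ← hSgeq] at hcalc
      simp only [zero_add, add_zero, sub_self, sub_zero, add_sub_cancel] at hcalc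
      exact eq_neg_of_add_eq_zero_left hcalc
    have h2eq : (2 : ℤ) = 1 + 1 := by norm_num
    have hdecomp : t =
        (∑ x : Fin n, ((Pi.single x (2 : ℤ) : Fin n → ℤ), (0 : Fin n → ℤ), (0 : Fin n → ℤ)))
        + (∑ y : Fin n, ((0 : Fin n → ℤ), (Pi.single y (2 : ℤ) : Fin n → ℤ), (0 : Fin n → ℤ)))
        + (∑ z : Fin n, ((0 : Fin n → ℤ), (0 : Fin n → ℤ), (Pi.single z (2 : ℤ) : Fin n → ℤ)))
        := by
      have hts : (fun _ : Fin n => (2 : ℤ)) = ∑ x : Fin n, Pi.single x (2 : ℤ) :=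
        (Finset.univ_sum_single _).symm
      rw [ht]
      simp only [Prod.ext_iff, Prod.fst_add, Prod.snd_add, Prod.fst_sum, Prod.snd_sum]
      refine ⟨?_, ?_, ?_⟩ <;>
        simp only [Finset.sum_const_zero, add_zero, zero_add] <;> exact hts
    have hsingle : ∀ w : Fin n, (Pi.single w (2 : ℤ) : Fin n → ℤ)
        = Pi.single w 1 + Pi.single w 1 := by
      intro w
      rw [← Pi.single_add, ← h2eq]
    have hft1 : f (∑ x : Fin n,
        ((Pi.single x (2 : ℤ) : Fin n → ℤ), (0 : Fin n → ℤ), (0 : Fin n → ℤ))) = Sa + Sa := by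
      rw [map_sum]
      have hterm : ∀ x : Fin n,
          f ((Pi.single x (2 : ℤ) : Fin n → ℤ), (0 : Fin n → ℤ), (0 : Fin n → ℤ))
          = a x + a x := by
        intro x
        rw [ha, ← map_add]
        congr 1
        simp [Prod.ext_iff, hsingle x]
      rw [Finset.sum_congr rfl (fun x _ => hterm x), Finset.sum_add_distrib, ← hSa]
    have hft2 : f (∑ y : Fin n,
        ((0 : Fin n → ℤ), (Pi.single y (2 : ℤ) : Fin n → ℤ), (0 : Fin n → ℤ))) = Sb + Sb := by
      rw [map_sum]
      have hterm : ∀ y : Fin n,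
          f ((0 : Fin n → ℤ), (Pi.single y (2 : ℤ) : Fin n → ℤ), (0 : Fin n → ℤ))
          = b y + b y := by
        intro y
        rw [hb, ← map_add]
        congr 1
        simp [Prod.ext_iff, hsingle y]
      rw [Finset.sum_congr rfl (fun y _ => hterm y), Finset.sum_add_distrib, ← hSb]
    have hft3 : f (∑ z : Fin n,
        ((0 : Fin n → ℤ), (0 : Fin n → ℤ), (Pi.single z (2 : ℤ) : Fin n → ℤ))) = Sc + Sc := by
      rw [map_sum]
      have hterm : ∀ z : Fin n,
          f ((0 : Fin n → ℤ), (0 : Fin n → ℤ), (Pi.single z (2 : ℤ) : Fin n → ℤ))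
          = cc z + cc z := by
        intro z
        rw [hcdef, ← map_add]
        congr 1
        simp [Prod.ext_iff, hsingle z]
      rw [Finset.sum_congr rfl (fun z _ => hterm z), Finset.sum_add_distrib, ← hSc]
    have hfteq : f t = (Sa + Sb + Sc) + (Sa + Sb + Sc) := by
      rw [hdecomp, map_add, map_add, hft1, hft2, hft3]
      abel
    apply hft
    have hSgSg : Sg + Sg = 0 := by rw [← hVs]; exact hVsum
    rw [hfteq, hX, ← neg_add, hSgSg, neg_zero]
  -- extract the weight from the span membership
  rw [hW, Submodule.mem_span_range_iff_exists_fun] at key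
  obtain ⟨c, hc⟩ := key
  refine ⟨c, ?_, ?_, ?_⟩
  · intro x
    have h1 := congrArg (fun q : ((Fin n → ℤ) × (Fin n → ℤ) × (Fin n → ℤ)) => q.1 x) hc
    simp only [ht] at h1
    rw [Prod.fst_sum] at h1
    simp only [hgen, Prod.smul_fst, Pi.smul_apply, Finset.sum_apply, Pi.single_apply,
      smul_eq_mul, mul_ite, mul_one, mul_zero] at h1
    rw [Fintype.sum_prod_type, Finset.sum_comm] at h1
    simp only [Finset.sum_ite_eq, Finset.mem_univ, if_true] at h1
    exact h1
  · intro y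
    have h1 := congrArg (fun q : ((Fin n → ℤ) × (Fin n → ℤ) × (Fin n → ℤ)) => q.2.1 y) hc
    simp only [ht] at h1
    rw [Prod.snd_sum, Prod.fst_sum] at h1
    simp only [hgen, Prod.smul_snd, Prod.smul_fst, Pi.smul_apply, Finset.sum_apply,
      Pi.single_apply, smul_eq_mul, mul_ite, mul_one, mul_zero] at h1
    rw [Fintype.sum_prod_type] at h1
    simp only [Finset.sum_ite_eq, Finset.mem_univ, if_true] at h1
    exact h1
  · intro z
    have h1 := congrArg (fun q : ((Fin n → ℤ) × (Fin n → ℤ) × (Fin n → ℤ)) => q.2.2 z) hc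
    simp only [ht] at h1
    rw [Prod.snd_sum, Prod.snd_sum] at h1
    simp only [hgen, Prod.smul_snd, Pi.smul_apply, Finset.sum_apply, Pi.single_apply,
      smul_eq_mul, mul_ite, mul_one, mul_zero] at h1
    rw [← h1]
    apply Finset.sum_congr rfl
    intro p _
    simp [eq_comm]

end TwoWeight

lemma isWeight_smul {L : Fin n × Fin n → Fin n} {θ : Fin n × Fin n → ℤ} {k : ℤ}
    (m : ℤ) (h : IsWeight L θ k) : IsWeight L (fun p => m * θ p) (m * k) := by
  obtain ⟨h1, h2, h3⟩ := h
  refine ⟨fun x => ?_, fun y => ?_, fun z => ?_⟩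
  · rw [← Finset.mul_sum, h1 x]
  · rw [← Finset.mul_sum, h2 y]
  · have he : ∀ p : Fin n × Fin n, (if L p = z then m * θ p else 0)
        = m * (if L p = z then θ p else 0) := by
      intro p; split <;> ring
    rw [Finset.sum_congr rfl (fun p _ => he p), ← Finset.mul_sum, h3 z]

lemma isWeight_add {L : Fin n × Fin n → Fin n} {θ θ' : Fin n × Fin n → ℤ} {k k' : ℤ}
    (h : IsWeight L θ k) (h' : IsWeight L θ' k') :
    IsWeight L (fun p => θ p + θ' p) (k + k') := by
  obtain ⟨h1, h2, h3⟩ := h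
  obtain ⟨h1', h2', h3'⟩ := h'
  refine ⟨fun x => ?_, fun y => ?_, fun z => ?_⟩
  · rw [Finset.sum_add_distrib, h1 x, h1' x]
  · rw [Finset.sum_add_distrib, h2 y, h2' y]
  · have he : ∀ p : Fin n × Fin n, (if L p = z then θ p + θ' p else 0)
        = (if L p = z then θ p else 0) + (if L p = z then θ' p else 0) := by
      intro p; split <;> ring
    rw [Finset.sum_congr rfl (fun p _ => he p), Finset.sum_add_distrib, h3 z, h3' z]

theorem weight_spectrum {n : ℕ} (L : Fin n × Fin n → Fin n) (hL : IsLatinSquare L) :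
    ((∀ k : ℤ, ∃ θ, IsWeight L θ k) ∨ (∀ k : ℤ, (∃ θ, IsWeight L θ k) ↔ Even k)) ∧
    ((∃ k : ℤ, Odd k ∧ ∃ θ, IsWeight L θ k) → ∀ k : ℤ, ∃ θ, IsWeight L θ k) := by
  rcases Nat.eq_zero_or_pos n with hn | hn
  · subst hn
    have hall : ∀ k : ℤ, ∃ θ, IsWeight L θ k :=
      fun k => ⟨fun _ => 0, fun x => x.elim0, fun y => y.elim0, fun z => z.elim0⟩
    exact ⟨Or.inl hall, fun _ => hall⟩
  · obtain ⟨θ₂, h2w⟩ := exists_two_weight hn L hL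
    have main : (∃ k : ℤ, Odd k ∧ ∃ θ, IsWeight L θ k) → ∀ k : ℤ, ∃ θ, IsWeight L θ k := by
      rintro ⟨k₀, ⟨j, hj⟩, θ₀, h₀⟩ k
      have hw := isWeight_add (isWeight_smul k h₀) (isWeight_smul (-(j * k)) h2w)
      have hk : k * k₀ + (-(j * k)) * 2 = k := by rw [hj]; ring
      rw [hk] at hw
      exact ⟨_, hw⟩
    refine ⟨?_, main⟩
    by_cases hodd : ∃ k : ℤ, Odd k ∧ ∃ θ, IsWeight L θ k
    · exact Or.inl (main hodd)
    · right
      intro k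
      constructor
      · intro hθ
        by_contra hev
        exact hodd ⟨k, Int.not_even_iff_odd.mp hev, hθ⟩
      · rintro ⟨m, rfl⟩
        have hw := isWeight_smul m h2w
        have hm : m * 2 = m + m := by ring
        rw [hm] at hw
        exact ⟨_, hw⟩
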